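/- arXiv:2603.02483 — 4 statements merged into one kernel-verified Lean document; each statement's English description precedes it below -/
import Mathlib

section
/- Let p, q ∈ Δ°_n be points of the open standard simplex with n ≥ 2, and let D_p = diag(p₁,…,pₙ) and D_q = diag(q₁,…,qₙ). Then the Hilbert VPM distance between the diagonal matrices equals the Hilbert simplex distance: d_H(D_p, D_q) = d_HΔ(p, q), i.e. log( max(max_i p_i/q_i, max_i (1−p_i)/(1−q_i)) / min(min_i p_i/q_i, min_i (1−p_i)/(1−q_i)) ) = log( (max_i p_i/q_i) / (min_i p_i/q_i) ). -/
open Matrix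

/-- The open variance-precision bicone VPM°(n): symmetric matrices `X` with
`X` and `I - X` positive definite. -/
def VPM (n : ℕ) : Set (Matrix (Fin n) (Fin n) ℝ) :=
  {X | X.PosDef ∧ (1 - X).PosDef}

/-- Largest (real) eigenvalue of a matrix, as the supremum of its real spectrum. -/
noncomputable def lmax {n : ℕ} (S : Matrix (Fin n) (Fin n) ℝ) : ℝ := sSup (spectrum ℝ S)

/-- Smallest (real) eigenvalue of a matrix, as the infimum of its real spectrum. -/
noncomputable def lmin {n : ℕ} (S : Matrix (Fin n) (Fin n) ℝ) : ℝ := sInf (spectrum ℝ S)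

/-- Hilbert VPM distance
`d_H(J₁,J₂) = log( max(λmax(J₂⁻¹J₁), λmax((I−J₂)⁻¹(I−J₁))) / min(λmin(J₂⁻¹J₁), λmin((I−J₂)⁻¹(I−J₁))) )`. -/
noncomputable def dH {n : ℕ} (J₁ J₂ : Matrix (Fin n) (Fin n) ℝ) : ℝ :=
  Real.log (max (lmax (J₂⁻¹ * J₁)) (lmax ((1 - J₂)⁻¹ * (1 - J₁))) /
            min (lmin (J₂⁻¹ * J₁)) (lmin ((1 - J₂)⁻¹ * (1 - J₁))))

lemma key_sub {n : ℕ} (hn : 2 ≤ n) (p q : Fin n → ℝ)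
    (hp1 : ∑ i, p i = 1) (hq1 : ∑ i, q i = 1) (c : ℝ)
    (h : ∀ j, p j ≤ c * q j) (i : Fin n) : 1 - p i ≤ c * (1 - q i) := by
  have h1 : ∑ j ∈ Finset.univ.erase i, p j ≤ ∑ j ∈ Finset.univ.erase i, (c * q j) :=
    Finset.sum_le_sum fun j _ => h j
  rw [← Finset.mul_sum] at h1
  rwa [Finset.sum_erase_eq_sub (Finset.mem_univ i),
    Finset.sum_erase_eq_sub (Finset.mem_univ i), hp1, hq1] at h1

/-- The Hilbert VPM distance between diagonal matrices built from points of the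
open standard simplex equals the Hilbert simplex distance. -/
theorem hilbert_vpm_eq_hilbert_simplex {n : ℕ} (hn : 2 ≤ n) (p q : Fin n → ℝ)
    (hp : ∀ i, 0 < p i) (hp1 : ∑ i, p i = 1)
    (hq : ∀ i, 0 < q i) (hq1 : ∑ i, q i = 1) :
    dH (Matrix.diagonal p) (Matrix.diagonal q)
      = Real.log ((⨆ i, p i / q i) / (⨅ i, p i / q i)) := by
  haveI : Nontrivial (Fin n) := Fin.nontrivial_iff_two_le.mpr hn
  have lt1 : ∀ (r : Fin n → ℝ), (∀ i, 0 < r i) → (∑ i, r i = 1) → ∀ i, r i < 1 := by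
    intro r hr hr1 i
    obtain ⟨j, hj⟩ := exists_ne i
    have h1 : r i + ∑ k ∈ Finset.univ.erase i, r k = 1 := by
      rw [Finset.add_sum_erase Finset.univ r (Finset.mem_univ i)]; exact hr1
    have h2 : r j ≤ ∑ k ∈ Finset.univ.erase i, r k :=
      Finset.single_le_sum (fun k _ => (hr k).le) (Finset.mem_erase.mpr ⟨hj, Finset.mem_univ j⟩)
    nlinarith [hr j]
  have hq1' := lt1 q hq hq1
  -- identify the matrices
  have hinv : ∀ r : Fin n → ℝ, (∀ i, r i ≠ 0) →
      (diagonal r)⁻¹ = diagonal (fun i => (r i)⁻¹) := by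
    intro r hr
    apply Matrix.inv_eq_right_inv
    rw [diagonal_mul_diagonal,
      show (fun i => r i * (r i)⁻¹) = fun _ : Fin n => (1 : ℝ) from
        funext fun i => mul_inv_cancel₀ (hr i), diagonal_one]
  have hd1 : (diagonal q)⁻¹ * diagonal p = diagonal (fun i => p i / q i) := by
    rw [hinv q (fun i => (hq i).ne'), diagonal_mul_diagonal,
      show (fun i => (q i)⁻¹ * p i) = fun i => p i / q i from
        funext fun i => (div_eq_inv_mul _ _).symm]
  have hd2 : (1 - diagonal q)⁻¹ * (1 - diagonal p)
      = diagonal (fun i => (1 - p i) / (1 - q i)) := by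
    have e1 : (1 - diagonal q : Matrix (Fin n) (Fin n) ℝ) = diagonal (fun i => 1 - q i) := by
      rw [← diagonal_one, diagonal_sub]
    have e2 : (1 - diagonal p : Matrix (Fin n) (Fin n) ℝ) = diagonal (fun i => 1 - p i) := by
      rw [← diagonal_one, diagonal_sub]
    rw [e1, e2, hinv _ (fun i => sub_ne_zero_of_ne (hq1' i).ne'),
      diagonal_mul_diagonal,
      show (fun i => (1 - q i)⁻¹ * (1 - p i)) = fun i => (1 - p i) / (1 - q i) from
        funext fun i => (div_eq_inv_mul _ _).symm]
  have bdd : ∀ r : Fin n → ℝ, BddAbove (Set.range r) := fun r => Set.Finite.bddAbove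
    (Set.finite_range r)
  have bddb : ∀ r : Fin n → ℝ, BddBelow (Set.range r) := fun r => Set.Finite.bddBelow
    (Set.finite_range r)
  -- key inequalities
  have hMle : ∀ i, (1 - p i) / (1 - q i) ≤ ⨆ j, p j / q j := by
    intro i
    have h1q : 0 < 1 - q i := by linarith [hq1' i]
    rw [div_le_iff₀ h1q]
    refine key_sub hn p q hp1 hq1 _ (fun j => ?_) i
    have : p j / q j ≤ ⨆ j, p j / q j := le_ciSup (bdd fun j => p j / q j) j
    exact (div_le_iff₀ (hq j)).mp this
  have hmge : ∀ i, (⨅ j, p j / q j) ≤ (1 - p i) / (1 - q i) := by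
    intro i
    have h1q : 0 < 1 - q i := by linarith [hq1' i]
    rw [le_div_iff₀ h1q]
    have step : ∀ j, (⨅ j, p j / q j) * q j ≤ p j := by
      intro j
      have h1 : (⨅ j, p j / q j) ≤ p j / q j := ciInf_le (bddb fun j => p j / q j) j
      calc (⨅ j, p j / q j) * q j ≤ (p j / q j) * q j :=
            mul_le_mul_of_nonneg_right h1 (hq j).le
        _ = p j := div_mul_cancel₀ _ (hq j).ne'
    -- symmetric version of key_sub
    have h1 : ∑ j ∈ Finset.univ.erase i, (⨅ j, p j / q j) * q j
        ≤ ∑ j ∈ Finset.univ.erase i, p j :=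
      Finset.sum_le_sum fun j _ => step j
    rw [← Finset.mul_sum] at h1
    rwa [Finset.sum_erase_eq_sub (Finset.mem_univ i),
      Finset.sum_erase_eq_sub (Finset.mem_univ i), hp1, hq1] at h1
  unfold dH lmax lmin
  rw [hd1, hd2, spectrum_diagonal, spectrum_diagonal, sSup_range, sSup_range,
    sInf_range, sInf_range]
  rw [max_eq_left (ciSup_le hMle), min_eq_left (le_ciInf hmge)]
end

section
/- Let p, q ∈ Δ°_n with p ≠ q, set M = max_i p_i/q_i and m = min_i p_i/q_i (so M > 1 > m), and for s ∈ [0,1] define t(s) = (1 − (M/m)^{1−s}) / ( (M/m)^{1−s}·(1/M − 1) − (1/m − 1) ) and γ(s) = (1 − t(s))·p + t(s)·q. Then t(s) ∈ [0,1] for all s ∈ [0,1] (so γ(s) ∈ Δ°_n), and for all s, s' ∈ [0,1] one has d_HΔ(γ(s), γ(s')) = |s − s'| · d_HΔ(p, q); that is, γ is the constant-speed Hilbert geodesic along the segment joining p and q. -/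
private lemma hsg_cross (a b pi qi pj qj : ℝ) (hab : a ≤ b) (h : pi * qj ≤ pj * qi) :
    ((1-a)*pi + a*qi)*((1-b)*pj + b*qj) ≤ ((1-a)*pj + a*qj)*((1-b)*pi + b*qi) := by
  nlinarith [mul_nonneg (sub_nonneg.2 h) (sub_nonneg.2 hab)]

private lemma hsg_key (M m k t D : ℝ) (hD : D = k*(1/M-1)-(1/m-1)) (hM : M ≠ 0) (hm : m ≠ 0)
    (ht : t * D = 1 - k) :
    ((1-t)*M + t) * k * m = M * ((1-t)*m + t) := by
  have hD' : D * (M*m) = k*m - k*M*m - M + M*m := by rw [hD]; field_simp; ring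
  linear_combination (M*m)*ht - t*hD'

/-- Hilbert simplex distance `d_HΔ(p,q) = log( (max_i p_i/q_i) / (min_i p_i/q_i) )`. -/
noncomputable def dHS {n : ℕ} (p q : Fin n → ℝ) : ℝ :=
  Real.log ((⨆ i, p i / q i) / (⨅ i, p i / q i))

set_option maxHeartbeats 1000000 in
/-- Constant-speed parameterization of the Hilbert geodesic joining two points of
the open standard simplex. -/
theorem hilbert_simplex_geodesic {n : ℕ} (p q : Fin n → ℝ)
    (hp : ∀ i, 0 < p i) (hp1 : ∑ i, p i = 1)
    (hq : ∀ i, 0 < q i) (hq1 : ∑ i, q i = 1) (hpq : p ≠ q)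
    (M m : ℝ) (hM : M = ⨆ i, p i / q i) (hm : m = ⨅ i, p i / q i)
    (t : ℝ → ℝ)
    (ht : ∀ s : ℝ, t s = (1 - (M / m) ^ (1 - s)) /
      ((M / m) ^ (1 - s) * (1 / M - 1) - (1 / m - 1)))
    (γ : ℝ → Fin n → ℝ)
    (hγ : ∀ s : ℝ, γ s = fun i => (1 - t s) * p i + t s * q i) :
    (∀ s ∈ Set.Icc (0:ℝ) 1,
      t s ∈ Set.Icc (0:ℝ) 1 ∧ (∀ i, 0 < γ s i) ∧ ∑ i, γ s i = 1) ∧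
    (∀ s ∈ Set.Icc (0:ℝ) 1, ∀ s' ∈ Set.Icc (0:ℝ) 1,
      dHS (γ s) (γ s') = |s - s'| * dHS p q) := by
  -- basic setup
  have hn : n ≠ 0 := by rintro rfl; simp at hp1
  haveI : Nonempty (Fin n) := Fin.pos_iff_nonempty.mp (Nat.pos_of_ne_zero hn)
  obtain ⟨iM, hiM, hiMs⟩ : ∃ i : Fin n, (∀ j, p j / q j ≤ p i / q i) ∧
      (⨆ j, p j / q j) = p i / q i := by
    obtain ⟨i, hi⟩ := Finite.exists_max (fun i => p i / q i)
    exact ⟨i, hi, le_antisymm (ciSup_le hi)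
      (le_ciSup (f := fun j => p j / q j) (Finite.bddAbove_range _) i)⟩
  obtain ⟨im, him, hims⟩ : ∃ i : Fin n, (∀ j, p i / q i ≤ p j / q j) ∧
      (⨅ j, p j / q j) = p i / q i := by
    obtain ⟨i, hi⟩ := Finite.exists_min (fun i => p i / q i)
    exact ⟨i, hi, le_antisymm (ciInf_le (f := fun j => p j / q j) (Finite.bddBelow_range _) i)
      (le_ciInf hi)⟩
  have hMr : M = p iM / q iM := by rw [hM, hiMs]
  have hmr : m = p im / q im := by rw [hm, hims]
  have hmpos : 0 < m := by rw [hmr]; exact div_pos (hp im) (hq im)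
  have hM1 : 1 < M := by
    by_contra h
    push_neg at h
    have hle : ∀ i ∈ Finset.univ, p i ≤ q i := by
      intro i _
      have h1 : p i / q i ≤ 1 := le_trans ((hiM i).trans hMr.symm.le) h
      exact (div_le_one (hq i)).1 h1
    have := (Finset.sum_eq_sum_iff_of_le hle).mp (hp1.trans hq1.symm)
    exact hpq (funext fun i => this i (Finset.mem_univ i))
  have hm1 : m < 1 := by
    by_contra h
    push_neg at h
    have hle : ∀ i ∈ Finset.univ, q i ≤ p i := by
      intro i _
      have h1 : 1 ≤ p i / q i := le_trans (h.trans hmr.le) (him i)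
      exact (one_le_div (hq i)).1 h1
    have := (Finset.sum_eq_sum_iff_of_le hle).mp (hq1.trans hp1.symm)
    exact hpq (funext fun i => (this i (Finset.mem_univ i)).symm)
  have hMpos : 0 < M := lt_trans one_pos hM1
  have hK1 : 1 < M / m := (one_lt_div hmpos).2 (lt_trans hm1 hM1)
  have hKpos : 0 < M / m := lt_trans one_pos hK1
  have hlogK : 0 < Real.log (M / m) := Real.log_pos hK1
  -- facts about k(s) = (M/m)^(1-s)
  have hkpos : ∀ s : ℝ, 0 < (M / m) ^ (1 - s) := fun s => Real.rpow_pos_of_pos hKpos _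
  have hk1 : ∀ s ∈ Set.Icc (0:ℝ) 1, 1 ≤ (M / m) ^ (1 - s) := by
    intro s hs
    exact Real.one_le_rpow hK1.le (by linarith [hs.2])
  have hkK : ∀ s ∈ Set.Icc (0:ℝ) 1, (M / m) ^ (1 - s) ≤ M / m := by
    intro s hs
    have := Real.rpow_le_rpow_of_exponent_le hK1.le (show (1:ℝ) - s ≤ 1 by linarith [hs.1])
    rwa [Real.rpow_one] at this
  have hDneg : ∀ s : ℝ, (M / m) ^ (1 - s) * (1/M - 1) - (1/m - 1) < 0 := by
    intro s
    have h1 : 1/M - 1 < 0 := by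
      have : 1/M < 1 := by rw [div_lt_one hMpos]; exact hM1
      linarith
    have h2 : 0 < 1/m - 1 := by
      have : 1 < 1/m := (one_lt_div hmpos).2 hm1
      linarith
    nlinarith [mul_pos (hkpos s) (show (0:ℝ) < 1 - 1/M by linarith)]
  have htD : ∀ s : ℝ, t s * ((M / m) ^ (1 - s) * (1/M - 1) - (1/m - 1))
      = 1 - (M / m) ^ (1 - s) := by
    intro s
    rw [ht s]
    exact div_mul_cancel₀ _ (hDneg s).ne
  have ht01 : ∀ s ∈ Set.Icc (0:ℝ) 1, t s ∈ Set.Icc (0:ℝ) 1 := by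
    intro s hs
    constructor
    · rw [ht s]
      exact div_nonneg_iff.2 (Or.inr ⟨by linarith [hk1 s hs], (hDneg s).le⟩)
    · rw [ht s]
      rw [div_le_one_of_neg (hDneg s)]
      have hkm : (M / m) ^ (1 - s) * m ≤ M := (le_div_iff₀ hmpos).1 (hkK s hs)
      have hdiv : (M / m) ^ (1 - s) / M ≤ 1 / m := by
        rw [div_le_div_iff₀ hMpos hmpos]
        linarith
      have heq : (M / m) ^ (1 - s) * (1/M - 1) = (M / m) ^ (1 - s) / M - (M / m) ^ (1 - s) := by
        ring
      linarith
  -- positivity and sum of γ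
  have hpos : ∀ s ∈ Set.Icc (0:ℝ) 1, ∀ i, 0 < γ s i := by
    intro s hs i
    obtain ⟨h0, h1⟩ := ht01 s hs
    simp only [hγ]
    nlinarith [mul_le_mul_of_nonneg_left (min_le_left (p i) (q i)) (sub_nonneg.2 h1),
      mul_le_mul_of_nonneg_left (min_le_right (p i) (q i)) h0,
      lt_min (hp i) (hq i)]
  have hsum : ∀ s ∈ Set.Icc (0:ℝ) 1, ∑ i, γ s i = 1 := by
    intro s hs
    simp only [hγ]
    rw [Finset.sum_add_distrib, ← Finset.mul_sum, ← Finset.mul_sum, hp1, hq1]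
    ring
  refine ⟨fun s hs => ⟨ht01 s hs, hpos s hs, hsum s hs⟩, ?_⟩
  -- the distance computation
  intro s hs s' hs'
  have hdpq : dHS p q = Real.log (M / m) := by rw [dHS, ← hM, ← hm]
  have hγs : ∀ i, γ s i = (1 - t s) * p i + t s * q i := fun i => by rw [hγ]
  have hγs' : ∀ i, γ s' i = (1 - t s') * p i + t s' * q i := fun i => by rw [hγ]
  have hpiM : p iM = M * q iM := ((eq_div_iff (hq iM).ne').1 hMr).symm
  have hpim : p im = m * q im := ((eq_div_iff (hq im).ne').1 hmr).symm
  obtain ⟨ha0, ha1⟩ := ht01 s hs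
  obtain ⟨hb0, hb1⟩ := ht01 s' hs'
  have hA1 : γ s iM = ((1 - t s) * M + t s) * q iM := by rw [hγs iM, hpiM]; ring
  have hA2 : γ s' iM = ((1 - t s') * M + t s') * q iM := by rw [hγs' iM, hpiM]; ring
  have hB1 : γ s im = ((1 - t s) * m + t s) * q im := by rw [hγs im, hpim]; ring
  have hB2 : γ s' im = ((1 - t s') * m + t s') * q im := by rw [hγs' im, hpim]; ring
  have hA1p : 0 < (1 - t s) * M + t s := by nlinarith
  have hA2p : 0 < (1 - t s') * M + t s' := by nlinarith
  have hB1p : 0 < (1 - t s) * m + t s := by nlinarith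
  have hB2p : 0 < (1 - t s') * m + t s' := by nlinarith
  have huiM : γ s iM / γ s' iM = ((1 - t s) * M + t s) / ((1 - t s') * M + t s') := by
    rw [hA1, hA2, mul_div_mul_right _ _ (hq iM).ne']
  have huim : γ s im / γ s' im = ((1 - t s) * m + t s) / ((1 - t s') * m + t s') := by
    rw [hB1, hB2, mul_div_mul_right _ _ (hq im).ne']
  have hIa : ((1 - t s) * M + t s) * ((M / m) ^ (1 - s)) * m
      = M * ((1 - t s) * m + t s) :=
    hsg_key M m _ (t s) _ rfl hMpos.ne' hmpos.ne' (htD s)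
  have hIb : ((1 - t s') * M + t s') * ((M / m) ^ (1 - s')) * m
      = M * ((1 - t s') * m + t s') :=
    hsg_key M m _ (t s') _ rfl hMpos.ne' hmpos.ne' (htD s')
  have hratio : (γ s iM / γ s' iM) / (γ s im / γ s' im)
      = (M / m) ^ (1 - s') / (M / m) ^ (1 - s) := by
    have h0 : (((1 - t s) * M + t s) * ((1 - t s') * m + t s') * (M / m) ^ (1 - s)
        - (M / m) ^ (1 - s') * (((1 - t s') * M + t s') * ((1 - t s) * m + t s))) * m = 0 := by
      linear_combination ((1 - t s') * m + t s') * hIa - ((1 - t s) * m + t s) * hIb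
    have hmain : ((1 - t s) * M + t s) * ((1 - t s') * m + t s') * (M / m) ^ (1 - s)
        = (M / m) ^ (1 - s') * (((1 - t s') * M + t s') * ((1 - t s) * m + t s)) := by
      have h1 := (mul_eq_zero.1 h0).resolve_right hmpos.ne'
      linarith
    rw [huiM, huim]
    rw [div_div_div_eq, div_eq_div_iff (mul_pos hA2p hB1p).ne' (hkpos s).ne']
    linear_combination hmain
  have hL : Real.log ((γ s iM / γ s' iM) / (γ s im / γ s' im))
      = (s - s') * Real.log (M / m) := by
    rw [hratio, Real.log_div (hkpos s').ne' (hkpos s).ne',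
      Real.log_rpow hKpos, Real.log_rpow hKpos]
    ring
  have huiMpos : 0 < γ s iM / γ s' iM := div_pos (hpos s hs iM) (hpos s' hs' iM)
  have huimpos : 0 < γ s im / γ s' im := div_pos (hpos s hs im) (hpos s' hs' im)
  have hrmul : ∀ j, p j * q iM ≤ p iM * q j := fun j =>
    (div_le_div_iff₀ (hq j) (hq iM)).1 (hiM j)
  have hrmul' : ∀ j, p im * q j ≤ p j * q im := fun j =>
    (div_le_div_iff₀ (hq im) (hq j)).1 (him j)
  rcases le_total (t s) (t s') with hab | hab
  · -- t s ≤ t s' : sup attained at iM, inf at im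
    have hub : ∀ i, γ s i / γ s' i ≤ γ s iM / γ s' iM := by
      intro i
      rw [div_le_div_iff₀ (hpos s' hs' i) (hpos s' hs' iM)]
      simp only [hγs, hγs']
      exact hsg_cross (t s) (t s') (p i) (q i) (p iM) (q iM) hab (hrmul i)
    have hlb : ∀ i, γ s im / γ s' im ≤ γ s i / γ s' i := by
      intro i
      rw [div_le_div_iff₀ (hpos s' hs' im) (hpos s' hs' i)]
      simp only [hγs, hγs']
      exact hsg_cross (t s) (t s') (p im) (q im) (p i) (q i) hab (hrmul' i)
    have hsup : (⨆ i, γ s i / γ s' i) = γ s iM / γ s' iM :=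
      le_antisymm (ciSup_le hub)
        (le_ciSup (f := fun i => γ s i / γ s' i) (Finite.bddAbove_range _) iM)
    have hinf : (⨅ i, γ s i / γ s' i) = γ s im / γ s' im :=
      le_antisymm (ciInf_le (f := fun i => γ s i / γ s' i) (Finite.bddBelow_range _) im)
        (le_ciInf hlb)
    have hLnn : 0 ≤ (s - s') * Real.log (M / m) := by
      rw [← hL]
      exact Real.log_nonneg ((one_le_div huimpos).2 (hlb iM))
    have hss : 0 ≤ s - s' :=
      nonneg_of_mul_nonneg_right (by rw [mul_comm]; exact hLnn) hlogK
    rw [dHS, hsup, hinf, hL, hdpq, abs_of_nonneg hss]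
  · -- t s' ≤ t s : sup attained at im, inf at iM
    have hub : ∀ i, γ s i / γ s' i ≤ γ s im / γ s' im := by
      intro i
      rw [div_le_div_iff₀ (hpos s' hs' i) (hpos s' hs' im)]
      simp only [hγs, hγs']
      have := hsg_cross (t s') (t s) (p im) (q im) (p i) (q i) hab (hrmul' i)
      nlinarith [this]
    have hlb : ∀ i, γ s iM / γ s' iM ≤ γ s i / γ s' i := by
      intro i
      rw [div_le_div_iff₀ (hpos s' hs' iM) (hpos s' hs' i)]
      simp only [hγs, hγs']
      have := hsg_cross (t s') (t s) (p i) (q i) (p iM) (q iM) hab (hrmul i)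
      nlinarith [this]
    have hsup : (⨆ i, γ s i / γ s' i) = γ s im / γ s' im :=
      le_antisymm (ciSup_le hub)
        (le_ciSup (f := fun i => γ s i / γ s' i) (Finite.bddAbove_range _) im)
    have hinf : (⨅ i, γ s i / γ s' i) = γ s iM / γ s' iM :=
      le_antisymm (ciInf_le (f := fun i => γ s i / γ s' i) (Finite.bddBelow_range _) iM)
        (le_ciInf hlb)
    have hinv : (γ s im / γ s' im) / (γ s iM / γ s' iM)
        = ((γ s iM / γ s' iM) / (γ s im / γ s' im))⁻¹ := by
      rw [inv_div]
    have hL' : Real.log ((γ s im / γ s' im) / (γ s iM / γ s' iM))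
        = (s' - s) * Real.log (M / m) := by
      rw [hinv, Real.log_inv, hL]; ring
    have hLnn : 0 ≤ (s' - s) * Real.log (M / m) := by
      rw [← hL']
      exact Real.log_nonneg ((one_le_div huiMpos).2 (hlb im))
    have hss : 0 ≤ s' - s :=
      nonneg_of_mul_nonneg_right (by rw [mul_comm]; exact hLnn) hlogK
    have habs : |s - s'| = s' - s := by
      rw [abs_sub_comm, abs_of_nonneg hss]
    rw [dHS, hsup, hinf, hL', hdpq, habs]
end

section
/- Let J₁, J₂ ∈ VPM°(n) with J₁ ≠ J₂. Set M = max(λmax(J₂^{−1/2}J₁J₂^{−1/2}), λmax((I−J₂)^{−1/2}(I−J₁)(I−J₂)^{−1/2})) and m = min(λmin(J₂^{−1/2}J₁J₂^{−1/2}), λmin((I−J₂)^{−1/2}(I−J₁)(I−J₂)^{−1/2})) (so M > m), and for s ∈ [0,1] define t(s) = (1 − (M/m)^{1−s}) / ( (M/m)^{1−s}·(1/M − 1) − (1/m − 1) ) and γ(s) = (1 − t(s))·J₁ + t(s)·J₂. Then t(s) ∈ [0,1] for all s ∈ [0,1] (so γ(s) ∈ VPM°(n)), and for all s, s' ∈ [0,1]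 one has d_H(γ(s), γ(s')) = |s − s'| · d_H(J₁, J₂). -/
open Matrix

open scoped ComplexOrder in
/-- The positive semidefinite square root of a positive semidefinite matrix
(the definition of `Matrix.PosSemidef.sqrt` from the older Mathlib, removed since). -/
noncomputable def Matrix.PosSemidef.sqrt {m 𝕜 : Type*} [Fintype m] [DecidableEq m] [RCLike 𝕜]
    {A : Matrix m m 𝕜} (hA : A.PosSemidef) : Matrix m m 𝕜 :=
  hA.1.eigenvectorUnitary.1 * diagonal ((↑) ∘ (√·) ∘ hA.1.eigenvalues) *
  (star hA.1.eigenvectorUnitary : Matrix m m 𝕜)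

section Aux


variable {n : ℕ}

lemma sqrt_posSemidef_aux {A : Matrix (Fin n) (Fin n) ℝ} (hA : A.PosSemidef) :
    hA.sqrt.PosSemidef := by
  unfold Matrix.PosSemidef.sqrt
  have hD : (diagonal ((↑) ∘ (√·) ∘ hA.1.eigenvalues) : Matrix (Fin n) (Fin n) ℝ).PosSemidef :=
    Matrix.posSemidef_diagonal_iff.mpr fun i => Real.sqrt_nonneg _
  have := hD.mul_mul_conjTranspose_same (hA.1.eigenvectorUnitary : Matrix (Fin n) (Fin n) ℝ)
  rwa [← Matrix.star_eq_conjTranspose, ← Unitary.coe_star] at this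

lemma sqrt_mul_self_aux {A : Matrix (Fin n) (Fin n) ℝ} (hA : A.PosSemidef) :
    hA.sqrt * hA.sqrt = A := by
  have hU : (star hA.1.eigenvectorUnitary : Matrix (Fin n) (Fin n) ℝ) * hA.1.eigenvectorUnitary = 1 :=
    Matrix.mem_unitaryGroup_iff'.mp hA.1.eigenvectorUnitary.2
  unfold Matrix.PosSemidef.sqrt
  conv_rhs => rw [hA.1.spectral_theorem, Unitary.conjStarAlgAut_apply]
  simp only [Matrix.mul_assoc]
  rw [← Matrix.mul_assoc _ (hA.1.eigenvectorUnitary : Matrix (Fin n) (Fin n) ℝ), hU,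
    Matrix.one_mul, ← Matrix.mul_assoc (diagonal _), diagonal_mul_diagonal]
  congr 3
  funext i
  simp [Real.mul_self_sqrt (hA.eigenvalues_nonneg i)]

lemma posDef_conj {P N : Matrix (Fin n) (Fin n) ℝ} (hP : P.PosDef) (hN : IsUnit N.det) :
    (Nᴴ * P * N).PosDef := by
  refine Matrix.PosDef.of_dotProduct_mulVec_pos (Matrix.isHermitian_conjTranspose_mul_mul N hP.1) fun x hx => ?_
  have hNx : N *ᵥ x ≠ 0 := by
    intro h
    apply hx
    have := congrArg (fun v => N⁻¹ *ᵥ v) h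
    simpa [Matrix.mulVec_mulVec, Matrix.nonsing_inv_mul N hN] using this
  simpa only [star_mulVec, Matrix.dotProduct_mulVec, Matrix.vecMul_vecMul] using hP.dotProduct_mulVec_pos hNx

lemma spectrum_conj_unit {S : Matrix (Fin n) (Fin n) ℝ} (X : Matrix (Fin n) (Fin n) ℝ)
    (hS : IsUnit S) : spectrum ℝ (S⁻¹ * X * S) = spectrum ℝ X := by
  have h1 : (↑hS.unit⁻¹ : Matrix (Fin n) (Fin n) ℝ) = S⁻¹ := by
    rw [Matrix.coe_units_inv, hS.unit_spec]
  have := spectrum.units_conjugate' (R := ℝ) (a := X) (u := hS.unit)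
  rwa [h1, hS.unit_spec] at this

lemma spectrum_conj_unitary {V : Matrix (Fin n) (Fin n) ℝ} (X : Matrix (Fin n) (Fin n) ℝ)
    (hV1 : V * star V = 1) (hV2 : star V * V = 1) :
    spectrum ℝ (V * X * star V) = spectrum ℝ X :=
  spectrum.units_conjugate (R := ℝ) (a := X) (u := ⟨V, star V, hV1, hV2⟩)

lemma wpos {t x : ℝ} (h0 : 0 ≤ t) (h1 : t ≤ 1) (hx : 0 < x) : 0 < (1 - t) * x + t := by
  rcases eq_or_lt_of_le h0 with h | h
  · rw [← h]; simpa using hx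
  · exact add_pos_of_nonneg_of_pos (mul_nonneg (by linarith) hx.le) h

lemma block [Nonempty (Fin n)] (P Q : Matrix (Fin n) (Fin n) ℝ)
    (hP : P.PosDef) (hQ : Q.PosDef) :
    ∃ E : Set ℝ, E.Finite ∧ E.Nonempty ∧ (∀ x ∈ E, 0 < x) ∧
      spectrum ℝ (hQ.posSemidef.sqrt⁻¹ * P * hQ.posSemidef.sqrt⁻¹) = E ∧
      spectrum ℝ (Q⁻¹ * P) = E ∧
      (∀ t t' : ℝ, 0 ≤ t' → t' ≤ 1 →
        spectrum ℝ (((1 - t') • P + t' • Q)⁻¹ * ((1 - t) • P + t • Q))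
          = (fun lam => ((1 - t') * lam + t')⁻¹ * ((1 - t) * lam + t)) '' E) ∧
      ((∀ x ∈ E, x ≤ 1) → (Q - P).PosSemidef) ∧
      ((∀ x ∈ E, 1 ≤ x) → (P - Q).PosSemidef) ∧
      ((Q - P).PosSemidef → ∀ x ∈ E, x ≤ 1) ∧
      ((P - Q).PosSemidef → ∀ x ∈ E, 1 ≤ x) ∧
      ((∀ x ∈ E, x = 1) → P = Q) := by
  classical
  set S := hQ.posSemidef.sqrt with hSdef
  have hS : S.PosSemidef := sqrt_posSemidef_aux hQ.posSemidef
  have hSH : Sᴴ = S := hS.1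
  have hSS : S * S = Q := sqrt_mul_self_aux hQ.posSemidef
  have hdet : IsUnit S.det := by
    have h1 : S.det * S.det = Q.det := by rw [← det_mul, hSS]
    have h2 := hQ.det_pos
    refine isUnit_iff_ne_zero.mpr fun h => ?_
    rw [h, mul_zero] at h1
    exact h2.ne' h1.symm
  have hSu : IsUnit S := (Matrix.isUnit_iff_isUnit_det S).mpr hdet
  have hS1 : S * S⁻¹ = 1 := Matrix.mul_nonsing_inv S hdet
  have hS2 : S⁻¹ * S = 1 := Matrix.nonsing_inv_mul S hdet
  have hSiH : (S⁻¹)ᴴ = S⁻¹ := by rw [Matrix.conjTranspose_nonsing_inv, hSH]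
  set A := S⁻¹ * P * S⁻¹ with hAdef
  have hA : A.PosDef := by
    have := posDef_conj hP (Matrix.isUnit_nonsing_inv_det S hdet)
    rwa [hSiH] at this
  have hAH : A.IsHermitian := hA.1
  set V : Matrix (Fin n) (Fin n) ℝ := ↑hAH.eigenvectorUnitary with hVdef
  have hV1 : V * star V = 1 := Matrix.mem_unitaryGroup_iff.mp hAH.eigenvectorUnitary.2
  have hV2 : star V * V = 1 := Matrix.mem_unitaryGroup_iff'.mp hAH.eigenvectorUnitary.2
  set a : Fin n → ℝ := hAH.eigenvalues with hadef
  have ha : ∀ i, 0 < a i := hA.eigenvalues_pos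
  set c : (Fin n → ℝ) → Matrix (Fin n) (Fin n) ℝ :=
    fun g => V * diagonal g * star V with hcdef
  have hspecA : A = c a := by
    conv_lhs => rw [hAH.spectral_theorem, Unitary.conjStarAlgAut_apply]
    rw [RCLike.ofReal_real_eq_id, Function.id_comp]
  have c_mul : ∀ g h : Fin n → ℝ, c g * c h = c (fun i => g i * h i) := by
    intro g h
    simp only [hcdef]
    calc V * diagonal g * star V * (V * diagonal h * star V)
        = V * diagonal g * (star V * V) * diagonal h * star V := by
          simp only [Matrix.mul_assoc]
      _ = V * (diagonal g * diagonal h) * star V := by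
          rw [hV2]; simp only [Matrix.mul_one, Matrix.mul_assoc]
      _ = _ := by rw [diagonal_mul_diagonal]
  have c_sub : ∀ g h : Fin n → ℝ, c g - c h = c (fun i => g i - h i) := by
    intro g h
    simp only [hcdef, ← Matrix.sub_mul, ← Matrix.mul_sub, ← diagonal_sub]
  have c_one : c (fun _ => 1) = 1 := by
    simp only [hcdef, Matrix.diagonal_one, Matrix.mul_one, hV1]
  have hSAS : S * A * S = P := by
    rw [hAdef]
    calc S * (S⁻¹ * P * S⁻¹) * S = S * S⁻¹ * P * (S⁻¹ * S) := by
          simp only [Matrix.mul_assoc]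
      _ = P := by rw [hS1, hS2, Matrix.one_mul, Matrix.mul_one]
  have crep : ∀ u v : ℝ, u • P + v • Q = S * c (fun i => u * a i + v) * S := by
    intro u v
    have h1 : diagonal (fun i => u * a i + v) = u • diagonal a + v • (1 : Matrix (Fin n) (Fin n) ℝ) := by
      rw [← Matrix.diagonal_one, ← diagonal_smul, ← diagonal_smul, diagonal_add]
      congr 1
      funext i
      simp
    have h2 : c (fun i => u * a i + v) = u • c a + v • (1 : Matrix (Fin n) (Fin n) ℝ) := by
      simp only [hcdef, h1, Matrix.mul_add, Matrix.add_mul, mul_smul_comm, smul_mul_assoc,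
        Matrix.mul_one, hV1]
    rw [h2, Matrix.mul_add, Matrix.add_mul, mul_smul_comm, mul_smul_comm, smul_mul_assoc,
      smul_mul_assoc, ← hspecA, hSAS, Matrix.mul_one, hSS]
  have crepP : P = S * c (fun i => a i) * S := by
    have := crep 1 0
    simpa using this
  have crepQ : Q = S * c (fun _ => 1) * S := by
    have := crep 0 1
    simpa using this
  have cdiag : ∀ g : Fin n → ℝ, star V * c g * V = diagonal g := by
    intro g
    calc star V * (V * diagonal g * star V) * V
        = star V * V * diagonal g * (star V * V) := by simp only [Matrix.mul_assoc]
      _ = diagonal g := by rw [hV2, Matrix.one_mul, Matrix.mul_one]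
  have sandwich : ∀ g : Fin n → ℝ, S⁻¹ * (S * c g * S) * S⁻¹ = c g := by
    intro g
    calc S⁻¹ * (S * c g * S) * S⁻¹
        = S⁻¹ * S * c g * (S * S⁻¹) := by simp only [Matrix.mul_assoc]
      _ = c g := by rw [hS2, hS1, Matrix.one_mul, Matrix.mul_one]
  have hQP : Q - P = S * c (fun i => 1 - a i) * S := by
    conv_lhs => rw [crepQ, crepP]
    rw [← Matrix.sub_mul, ← Matrix.mul_sub, c_sub]
  have hPQ : P - Q = S * c (fun i => a i - 1) * S := by
    conv_lhs => rw [crepQ, crepP]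
    rw [← Matrix.sub_mul, ← Matrix.mul_sub, c_sub]
  have cpsd : ∀ g : Fin n → ℝ, (∀ i, 0 ≤ g i) → (S * c g * S).PosSemidef := by
    intro g hg
    have h1 : (diagonal g).PosSemidef := Matrix.posSemidef_diagonal_iff.mpr hg
    have h2 : (c g).PosSemidef := by
      have := h1.mul_mul_conjTranspose_same V
      rwa [← Matrix.star_eq_conjTranspose] at this
    have := h2.mul_mul_conjTranspose_same S
    rwa [hSH] at this
  have cpsd' : ∀ g : Fin n → ℝ, (S * c g * S).PosSemidef → ∀ i, 0 ≤ g i := by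
    intro g hg
    have h2 : (c g).PosSemidef := by
      have := hg.conjTranspose_mul_mul_same S⁻¹
      rwa [hSiH, sandwich] at this
    have h3 : (diagonal g).PosSemidef := by
      have := h2.conjTranspose_mul_mul_same V
      rwa [← Matrix.star_eq_conjTranspose, cdiag] at this
    exact Matrix.posSemidef_diagonal_iff.mp h3
  refine ⟨Set.range a, Set.finite_range a, Set.range_nonempty a, ?_, ?_, ?_, ?_, ?_, ?_, ?_, ?_, ?_⟩
  · rintro x ⟨i, rfl⟩; exact ha i
  · rw [hspecA]
    show spectrum ℝ (V * diagonal a * star V) = Set.range a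
    rw [spectrum_conj_unitary _ hV1 hV2, spectrum_diagonal]
  · have h1 : Q⁻¹ * P = S⁻¹ * A * S := by
      rw [hAdef, ← hSS, Matrix.mul_inv_rev]
      simp only [Matrix.mul_assoc, hS2, Matrix.mul_one]
    rw [h1, spectrum_conj_unit _ hSu, hspecA]
    show spectrum ℝ (V * diagonal a * star V) = Set.range a
    rw [spectrum_conj_unitary _ hV1 hV2, spectrum_diagonal]
  · intro t t' ht0 ht1
    have hf' : ∀ i, ((1 - t') * a i + t') ≠ 0 := fun i => (wpos ht0 ht1 (ha i)).ne'
    have hC't : (c fun i => (1 - t') * a i + t')⁻¹ = c fun i => ((1 - t') * a i + t')⁻¹ := by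
      apply Matrix.inv_eq_right_inv
      rw [c_mul]
      have h9 : (fun i => ((1 - t') * a i + t') * ((1 - t') * a i + t')⁻¹)
          = fun _ : Fin n => (1 : ℝ) := by
        funext i; exact mul_inv_cancel₀ (hf' i)
      rw [h9, c_one]
    have e := crep (1 - t) t
    have e' := crep (1 - t') t'
    rw [e, e', Matrix.mul_inv_rev, Matrix.mul_inv_rev]
    have hre : S⁻¹ * ((c fun i => (1 - t') * a i + t')⁻¹ * S⁻¹) *
        (S * c (fun i => (1 - t) * a i + t) * S)
        = S⁻¹ * ((c fun i => (1 - t') * a i + t')⁻¹ * c (fun i => (1 - t) * a i + t)) * S := by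
      calc S⁻¹ * ((c fun i => (1 - t') * a i + t')⁻¹ * S⁻¹) *
            (S * c (fun i => (1 - t) * a i + t) * S)
          = S⁻¹ * ((c fun i => (1 - t') * a i + t')⁻¹ *
              (S⁻¹ * S * (c (fun i => (1 - t) * a i + t) * S))) := by
            simp only [Matrix.mul_assoc]
        _ = _ := by rw [hS2, Matrix.one_mul]; simp only [Matrix.mul_assoc]
    rw [hre, spectrum_conj_unit _ hSu, hC't, c_mul]
    show spectrum ℝ (V * diagonal _ * star V) = _
    rw [spectrum_conj_unitary _ hV1 hV2, spectrum_diagonal, ← Set.range_comp]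
    rfl
  · intro h
    rw [hQP]
    exact cpsd _ fun i => by have := h (a i) ⟨i, rfl⟩; linarith
  · intro h
    rw [hPQ]
    exact cpsd _ fun i => by have := h (a i) ⟨i, rfl⟩; linarith
  · rintro hpsd x ⟨i, rfl⟩
    rw [hQP] at hpsd
    have := cpsd' _ hpsd i
    linarith
  · rintro hpsd x ⟨i, rfl⟩
    rw [hPQ] at hpsd
    have := cpsd' _ hpsd i
    linarith
  · intro h
    have ha1 : (fun i => a i) = fun _ : Fin n => (1 : ℝ) := funext fun i => h (a i) ⟨i, rfl⟩
    rw [crepP, crepQ, ha1]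


lemma tprop {M m s T : ℝ} (hm0 : 0 < m) (hmM : m < M) (hm1 : m ≤ 1) (hM1 : 1 ≤ M)
    (hs0 : 0 ≤ s) (hs1 : s ≤ 1)
    (hT : T = (1 - (M / m) ^ (1 - s)) / ((M / m) ^ (1 - s) * (1 / M - 1) - (1 / m - 1))) :
    0 ≤ T ∧ T ≤ 1 ∧ (1 - T) * M + T = (M / m) ^ s * ((1 - T) * m + T) := by
  have hM0 : 0 < M := lt_trans hm0 hmM
  set k := M / m with hk
  have hk1 : 1 < k := (one_lt_div hm0).mpr hmM
  have hk0 : 0 < k := zero_lt_one.trans hk1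
  set u := k ^ (1 - s) with hu
  have hu0 : 0 < u := Real.rpow_pos_of_pos hk0 _
  have hu1 : 1 ≤ u := by
    calc (1:ℝ) = k ^ (0:ℝ) := (Real.rpow_zero k).symm
    _ ≤ u := Real.rpow_le_rpow_of_exponent_le hk1.le (by linarith)
  have huk : u ≤ k := by
    calc u ≤ k ^ (1:ℝ) := Real.rpow_le_rpow_of_exponent_le hk1.le (by linarith)
    _ = k := Real.rpow_one k
  set D := u * (1 / M - 1) - (1 / m - 1) with hD
  have hMinv : 1 / M ≤ 1 := by rw [div_le_one hM0]; exact hM1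
  have hminv : 1 ≤ 1 / m := by rw [le_div_iff₀ hm0]; linarith
  have hDneg : D < 0 := by
    rcases eq_or_lt_of_le hm1 with h | h
    · have hM1' : 1 < M := by rw [h] at hmM; exact hmM
      have h2 : 1 / M < 1 := by rw [div_lt_one hM0]; linarith
      have h3 : 1 / m = 1 := by rw [h, div_one]
      rw [hD, h3]
      nlinarith
    · have h2 : 1 < 1 / m := by rw [lt_div_iff₀ hm0]; linarith
      have h3 : u * (1 / M - 1) ≤ 0 := mul_nonpos_of_nonneg_of_nonpos hu0.le (by linarith)
      rw [hD]; linarith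
  have hT0 : 0 ≤ T := by
    rw [hT]
    rw [div_nonneg_iff]
    right
    exact ⟨by linarith, hDneg.le⟩
  have hnum : D ≤ 1 - u := by
    have h1 : u / M ≤ 1 / m := by
      rw [div_le_div_iff₀ hM0 hm0]
      have h4 : u * m ≤ M := by
        have := (le_div_iff₀ hm0).mp huk
        linarith
      linarith
    have h2 : D = u / M - 1 / m + (1 - u) := by rw [hD]; ring
    rw [h2]
    linarith
  have hT1 : T ≤ 1 := by
    rw [hT, div_le_one_of_neg hDneg]
    exact hnum
  refine ⟨hT0, hT1, ?_⟩
  have hTD : T * D = 1 - u := by rw [hT]; exact div_mul_cancel₀ _ hDneg.ne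
  have hks : k ^ s * u = k := by
    rw [hu, ← Real.rpow_add hk0, show s + (1 - s) = 1 by ring, Real.rpow_one]
  have e1 : ((1 - T) * M + T) * D = 1 - k := by
    have e : ((1 - T) * M + T) * D = M * D - (T * D) * (M - 1) := by ring
    rw [e, hTD, hD, hk]
    field_simp
    ring
  have e2 : ((1 - T) * m + T) * D = u * (m - M) / M := by
    have e : ((1 - T) * m + T) * D = m * D - (T * D) * (m - 1) := by ring
    rw [e, hTD, hD]
    field_simp
    ring
  apply mul_right_cancel₀ hDneg.ne
  rw [e1, show k ^ s * ((1 - T) * m + T) * D = k ^ s * (((1 - T) * m + T) * D) by ring, e2,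
    show k ^ s * (u * (m - M) / M) = (k ^ s * u) * (m - M) / M by ring, hks, hk]
  field_simp


variable {n : ℕ}

lemma between {x p q : ℝ} (h : (x - p) * (x - q) ≤ 0) : min p q ≤ x ∧ x ≤ max p q := by
  constructor
  · by_contra hc
    push_neg at hc
    rw [lt_min_iff] at hc
    nlinarith [mul_pos (sub_pos.mpr hc.1) (sub_pos.mpr hc.2)]
  · by_contra hc
    push_neg at hc
    rw [max_lt_iff] at hc
    nlinarith [mul_pos (sub_pos.mpr hc.1) (sub_pos.mpr hc.2)]

lemma combPosDef {P Q : Matrix (Fin n) (Fin n) ℝ} (hP : P.PosDef) (hQ : Q.PosDef)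
    {T : ℝ} (h0 : 0 ≤ T) (h1 : T ≤ 1) : ((1 - T) • P + T • Q).PosDef := by
  refine Matrix.PosDef.of_dotProduct_mulVec_pos ?_ fun x hx => ?_
  · show _ = _
    rw [conjTranspose_add, conjTranspose_smul, conjTranspose_smul, hP.1.eq, hQ.1.eq]
    simp
  · have e : (star x) ⬝ᵥ (((1 - T) • P + T • Q) *ᵥ x)
        = (1 - T) * ((star x) ⬝ᵥ (P *ᵥ x)) + T * ((star x) ⬝ᵥ (Q *ᵥ x)) := by
      rw [Matrix.add_mulVec, Matrix.smul_mulVec, Matrix.smul_mulVec,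
        dotProduct_add, dotProduct_smul, dotProduct_smul, smul_eq_mul, smul_eq_mul]
    rw [e]
    have hPx := hP.dotProduct_mulVec_pos hx
    have hQx := (hQ.posSemidef).dotProduct_mulVec_nonneg x
    rcases eq_or_lt_of_le h1 with h | h
    · have hQx' := hQ.dotProduct_mulVec_pos hx
      rw [← h]
      nlinarith
    · nlinarith [mul_pos (by linarith : (0:ℝ) < 1 - T) hPx, mul_nonneg h0 hQx]

lemma one_sub_comb (T : ℝ) (X Y : Matrix (Fin n) (Fin n) ℝ) :
    (1 : Matrix (Fin n) (Fin n) ℝ) - ((1 - T) • X + T • Y)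
      = (1 - T) • (1 - X) + T • (1 - Y) := by
  simp only [smul_sub, sub_smul, one_smul]
  abel

end Aux

/-- Constant-speed parameterization of the Hilbert geodesic joining two points of
the open VPM bicone. -/
theorem hilbert_vpm_geodesic {n : ℕ} (J₁ J₂ : Matrix (Fin n) (Fin n) ℝ)
    (h₁ : J₁ ∈ VPM n) (h₂ : J₂ ∈ VPM n) (hne : J₁ ≠ J₂)
    (M m : ℝ)
    (hM : M = max (lmax (h₂.1.posSemidef.sqrt⁻¹ * J₁ * h₂.1.posSemidef.sqrt⁻¹))
                  (lmax (h₂.2.posSemidef.sqrt⁻¹ * (1 - J₁) * h₂.2.posSemidef.sqrt⁻¹)))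
    (hm : m = min (lmin (h₂.1.posSemidef.sqrt⁻¹ * J₁ * h₂.1.posSemidef.sqrt⁻¹))
                  (lmin (h₂.2.posSemidef.sqrt⁻¹ * (1 - J₁) * h₂.2.posSemidef.sqrt⁻¹)))
    (t : ℝ → ℝ)
    (ht : ∀ s : ℝ, t s = (1 - (M / m) ^ (1 - s)) /
      ((M / m) ^ (1 - s) * (1 / M - 1) - (1 / m - 1)))
    (γ : ℝ → Matrix (Fin n) (Fin n) ℝ)
    (hγ : ∀ s : ℝ, γ s = (1 - t s) • J₁ + t s • J₂) :
    (∀ s ∈ Set.Icc (0:ℝ) 1, t s ∈ Set.Icc (0:ℝ) 1 ∧ γ s ∈ VPM n) ∧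
    (∀ s ∈ Set.Icc (0:ℝ) 1, ∀ s' ∈ Set.Icc (0:ℝ) 1,
      dH (γ s) (γ s') = |s - s'| * dH J₁ J₂) := by
  rcases Nat.eq_zero_or_pos n with hn | hn
  · exfalso
    apply hne
    subst hn
    ext i j
    exact i.elim0
  haveI : Nonempty (Fin n) := ⟨⟨0, hn⟩⟩
  obtain ⟨Ea, hEaF, hEaN, hEapos, hsA, hsQP, hsMix, F1a, F2a, B1a, B2a, hEQa⟩ :=
    block J₁ J₂ h₁.1 h₂.1
  obtain ⟨Eb, hEbF, hEbN, hEbpos, hsB, hsQPb, hsMixb, F1b, F2b, B1b, B2b, hEQb⟩ :=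
    block (1 - J₁) (1 - J₂) h₁.2 h₂.2
  set E := Ea ∪ Eb with hE
  have hEF : E.Finite := hEaF.union hEbF
  have hEN : E.Nonempty := hEaN.inl
  have hMs : M = sSup E := by
    rw [hM]
    unfold lmax
    rw [hsA, hsB, hE, csSup_union hEaF.bddAbove hEaN hEbF.bddAbove hEbN]
  have hms : m = sInf E := by
    rw [hm]
    unfold lmin
    rw [hsA, hsB, hE, csInf_union hEaF.bddBelow hEaN hEbF.bddBelow hEbN]
  have hME : M ∈ E := by rw [hMs]; exact hEN.csSup_mem hEF
  have hmE : m ∈ E := by rw [hms]; exact hEN.csInf_mem hEF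
  have hub : ∀ x ∈ E, x ≤ M := fun x hx => by rw [hMs]; exact le_csSup hEF.bddAbove hx
  have hlb : ∀ x ∈ E, m ≤ x := fun x hx => by rw [hms]; exact csInf_le hEF.bddBelow hx
  have hpos : ∀ x ∈ E, 0 < x := by rintro x (hx | hx); exacts [hEapos x hx, hEbpos x hx]
  have hm0 : 0 < m := hpos m hmE
  have hsub : (1 - J₂ : Matrix (Fin n) (Fin n) ℝ) - (1 - J₁) = J₁ - J₂ := by abel
  have hsub' : (1 - J₁ : Matrix (Fin n) (Fin n) ℝ) - (1 - J₂) = J₂ - J₁ := by abel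
  have hm1 : m ≤ 1 := by
    by_contra hcon
    push_neg at hcon
    have h1 : (J₁ - J₂).PosSemidef :=
      F2a fun x hx => by have := hlb x (Or.inl hx); linarith
    have h2 : ∀ x ∈ Eb, x ≤ 1 := B1b (by rw [hsub]; exact h1)
    obtain ⟨x, hx⟩ := hEbN
    have h3 := hlb x (Or.inr hx)
    have h4 := h2 x hx
    linarith
  have hM1 : 1 ≤ M := by
    by_contra hcon
    push_neg at hcon
    have h1 : (J₂ - J₁).PosSemidef :=
      F1a fun x hx => by have := hub x (Or.inl hx); linarith
    have h2 : ∀ x ∈ Eb, 1 ≤ x := B2b (by rw [hsub']; exact h1)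
    obtain ⟨x, hx⟩ := hEbN
    have h3 := hub x (Or.inr hx)
    have h4 := h2 x hx
    linarith
  have hmM : m < M := by
    rcases eq_or_lt_of_le (hm1.trans hM1) with h | h
    · exfalso
      apply hne
      apply hEQa
      intro x hx
      have h3 := hub x (Or.inl hx)
      have h4 := hlb x (Or.inl hx)
      linarith
    · exact h
  have part1 : ∀ s ∈ Set.Icc (0:ℝ) 1, t s ∈ Set.Icc (0:ℝ) 1 ∧ γ s ∈ VPM n := by
    intro s hs
    obtain ⟨h0, h1', -⟩ := tprop hm0 hmM hm1 hM1 hs.1 hs.2 (ht s)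
    refine ⟨⟨h0, h1'⟩, ?_, ?_⟩
    · rw [hγ s]; exact combPosDef h₁.1 h₂.1 h0 h1'
    · rw [hγ s, one_sub_comb]; exact combPosDef h₁.2 h₂.2 h0 h1'
  refine ⟨part1, ?_⟩
  intro s hs s' hs'
  obtain ⟨hT0, hT1, hkey⟩ := tprop hm0 hmM hm1 hM1 hs.1 hs.2 (ht s)
  obtain ⟨hT0', hT1', hkey'⟩ := tprop hm0 hmM hm1 hM1 hs'.1 hs'.2 (ht s')
  set T := t s with hTdef
  set T' := t s' with hT'def
  set k := M / m with hkdef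
  have hk1 : 1 < k := (one_lt_div hm0).mpr hmM
  have hk0 : 0 < k := zero_lt_one.trans hk1
  set g : ℝ → ℝ := fun lam => ((1 - T') * lam + T')⁻¹ * ((1 - T) * lam + T) with hg
  have hspec1 : spectrum ℝ ((γ s')⁻¹ * γ s) = g '' Ea := by
    rw [hγ s, hγ s']
    exact hsMix T T' hT0' hT1'
  have hspec2 : spectrum ℝ ((1 - γ s')⁻¹ * (1 - γ s)) = g '' Eb := by
    rw [hγ s, hγ s', one_sub_comb, one_sub_comb]
    exact hsMixb T T' hT0' hT1'
  have hw : ∀ x ∈ E, 0 < (1 - T) * x + T := fun x hx => wpos hT0 hT1 (hpos x hx)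
  have hw' : ∀ x ∈ E, 0 < (1 - T') * x + T' := fun x hx => wpos hT0' hT1' (hpos x hx)
  have hgpos : ∀ x ∈ E, 0 < g x := fun x hx =>
    mul_pos (inv_pos.mpr (hw' x hx)) (hw x hx)
  have hbtw : ∀ x ∈ E, (g x - g M) * (g x - g m) ≤ 0 := by
    intro x hx
    have d1 := (hw' x hx).ne'
    have d2 := (hw' M hME).ne'
    have d3 := (hw' m hmE).ne'
    have e1 : g x - g M = ((x - M) * (T' - T)) /
        (((1 - T') * x + T') * ((1 - T') * M + T')) := by
      simp only [hg]
      field_simp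
      ring
    have e2 : g x - g m = ((x - m) * (T' - T)) /
        (((1 - T') * x + T') * ((1 - T') * m + T')) := by
      simp only [hg]
      field_simp
      ring
    rw [e1, e2, div_mul_div_comm]
    apply div_nonpos_of_nonpos_of_nonneg
    · have key : (x - M) * (T' - T) * ((x - m) * (T' - T))
          = (x - M) * ((x - m) * (T' - T) ^ 2) := by ring
      rw [key]
      refine mul_nonpos_iff.mpr (Or.inr ⟨by have := hub x hx; linarith, ?_⟩)
      exact mul_nonneg (by have := hlb x hx; linarith) (sq_nonneg _)
    · exact le_of_lt (mul_pos (mul_pos (hw' x hx) (hw' M hME))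
        (mul_pos (hw' x hx) (hw' m hmE)))
  have hG : IsGreatest (g '' E) (max (g M) (g m)) := by
    constructor
    · rcases le_total (g M) (g m) with h | h
      · rw [max_eq_right h]; exact ⟨m, hmE, rfl⟩
      · rw [max_eq_left h]; exact ⟨M, hME, rfl⟩
    · rintro y ⟨x, hx, rfl⟩
      exact (between (hbtw x hx)).2
  have hL : IsLeast (g '' E) (min (g M) (g m)) := by
    constructor
    · rcases le_total (g M) (g m) with h | h
      · rw [min_eq_left h]; exact ⟨M, hME, rfl⟩
      · rw [min_eq_right h]; exact ⟨m, hmE, rfl⟩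
    · rintro y ⟨x, hx, rfl⟩
      exact (between (hbtw x hx)).1
  have hd1 : dH (γ s) (γ s') = Real.log (max (g M) (g m) / min (g M) (g m)) := by
    unfold dH lmax lmin
    rw [hspec1, hspec2]
    rw [show g '' Ea = g '' Ea from rfl]
    have hu1 : max (sSup (g '' Ea)) (sSup (g '' Eb)) = sSup (g '' E) := by
      rw [hE, Set.image_union, csSup_union (hEaF.image g).bddAbove (hEaN.image g)
        (hEbF.image g).bddAbove (hEbN.image g)]
    have hu2 : min (sInf (g '' Ea)) (sInf (g '' Eb)) = sInf (g '' E) := by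
      rw [hE, Set.image_union, csInf_union (hEaF.image g).bddBelow (hEaN.image g)
        (hEbF.image g).bddBelow (hEbN.image g)]
    rw [hu1, hu2, hG.csSup_eq, hL.csInf_eq]
  have hdJ : dH J₁ J₂ = Real.log k := by
    unfold dH lmax lmin
    rw [hsQP, hsQPb]
    have hMmax : max (sSup Ea) (sSup Eb) = M := by
      rw [hMs, hE, csSup_union hEaF.bddAbove hEaN hEbF.bddAbove hEbN]
    have hmmin : min (sInf Ea) (sInf Eb) = m := by
      rw [hms, hE, csInf_union hEaF.bddBelow hEaN hEbF.bddBelow hEbN]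
    rw [hMmax, hmmin]
  have hgm0 : 0 < g m := hgpos m hmE
  have hrel : g M = k ^ (s - s') * g m := by
    simp only [hg]
    rw [hkey, hkey', Real.rpow_sub hk0]
    have h1 := (hw m hmE).ne'
    have h2 := (hw' m hmE).ne'
    have h3 : (k:ℝ) ^ (s':ℝ) ≠ 0 := (Real.rpow_pos_of_pos hk0 _).ne'
    field_simp
  rw [hd1, hdJ]
  rcases le_total s' s with hss | hss
  · have hc1 : 1 ≤ k ^ (s - s') := by
      calc (1:ℝ) = k ^ (0:ℝ) := (Real.rpow_zero k).symm
      _ ≤ _ := Real.rpow_le_rpow_of_exponent_le hk1.le (by linarith)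
    have hge : g m ≤ g M := by rw [hrel]; nlinarith
    rw [max_eq_left hge, min_eq_right hge, hrel, mul_div_assoc, div_self hgm0.ne',
      mul_one, Real.log_rpow hk0, abs_of_nonneg (by linarith : (0:ℝ) ≤ s - s')]
  · have hc1 : k ^ (s - s') ≤ 1 := by
      calc k ^ (s - s') ≤ k ^ (0:ℝ) :=
        Real.rpow_le_rpow_of_exponent_le hk1.le (by linarith)
      _ = 1 := Real.rpow_zero k
    have hle : g M ≤ g m := by rw [hrel]; nlinarith
    rw [max_eq_right hle, min_eq_left hle]
    have hquot : g m / g M = k ^ (s' - s) := by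
      rw [hrel]
      have h4 : (k:ℝ) ^ (s - s') ≠ 0 := (Real.rpow_pos_of_pos hk0 _).ne'
      field_simp
      rw [← Real.rpow_add hk0, show s - s' + (s' - s) = 0 by ring,
        Real.rpow_zero]
    rw [hquot, Real.log_rpow hk0, abs_of_nonpos (by linarith : s - s' ≤ 0)]
    ring
end

section
/- Let P be an n×n real symmetric positive-definite matrix and V an n×n real symmetric matrix. Set X = P(I+P)⁻¹ (James' map, so X ∈ VPM°(n)) and S = (I+P)⁻¹ V (I+P)⁻¹ (the differential of James' map applied to V). Then tr(X⁻¹ S X⁻¹ S) + tr((I−X)⁻¹ S (I−X)⁻¹ S) ≤ tr(P⁻¹ V P⁻¹ V); i.e., James' map is pointwise 1-Lipschitz from the affine-invariant Riemannian metric on PD(n) to the bilogdet (log-barrier) Hessian metric on VPM°(n). -/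
open Matrix

lemma psd_trace_nonneg {n : ℕ} {A : Matrix (Fin n) (Fin n) ℝ} (hA : A.PosSemidef) :
    0 ≤ A.trace := by
  rw [Matrix.trace]
  refine Finset.sum_nonneg fun i _ => ?_
  exact hA.diag_nonneg

lemma trace_mul_nonneg {n : ℕ} {A B : Matrix (Fin n) (Fin n) ℝ}
    (hA : A.PosSemidef) (hB : B.PosSemidef) : 0 ≤ (A * B).trace := by
  obtain ⟨s, hsherm, hss⟩ : ∃ s : Matrix (Fin n) (Fin n) ℝ, sᴴ = s ∧ s * s = A :=
    open scoped MatrixOrder Matrix.Norms.L2Operator in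
      ⟨CFC.sqrt A, (CFC.sqrt_nonneg A).isSelfAdjoint.star_eq, CFC.sqrt_mul_sqrt_self A hA.nonneg⟩
  rw [← hss, Matrix.mul_assoc, Matrix.trace_mul_comm, Matrix.mul_assoc]
  have := hB.mul_mul_conjTranspose_same s
  rw [hsherm, Matrix.mul_assoc] at this
  exact psd_trace_nonneg this

/-- James' map is pointwise 1-Lipschitz from the affine-invariant Riemannian metric
on PD(n) to the bilogdet (log-barrier) Hessian metric on VPM°(n):
with `X = P(I+P)⁻¹` and `S = (I+P)⁻¹ V (I+P)⁻¹`,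
`tr(X⁻¹SX⁻¹S) + tr((I−X)⁻¹S(I−X)⁻¹S) ≤ tr(P⁻¹VP⁻¹V)`. -/
theorem james_pointwise_one_lipschitz {n : ℕ} (P V : Matrix (Fin n) (Fin n) ℝ)
    (hP : P.PosDef) (hV : V.IsHermitian)
    (X S : Matrix (Fin n) (Fin n) ℝ)
    (hX : X = P * (1 + P)⁻¹) (hS : S = (1 + P)⁻¹ * V * (1 + P)⁻¹) :
    Matrix.trace (X⁻¹ * S * X⁻¹ * S) + Matrix.trace ((1 - X)⁻¹ * S * (1 - X)⁻¹ * S)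
      ≤ Matrix.trace (P⁻¹ * V * P⁻¹ * V) := by
  set D : Matrix (Fin n) (Fin n) ℝ := 1 + P with hD
  set C : Matrix (Fin n) (Fin n) ℝ := P⁻¹ + 1 with hC
  have hDpd : D.PosDef := Matrix.PosDef.add Matrix.PosDef.one hP
  have hCpd : C.PosDef := Matrix.PosDef.add hP.inv Matrix.PosDef.one
  have hDdet : IsUnit D.det := isUnit_iff_isUnit_det _ |>.1 hDpd.isUnit
  have hPdet : IsUnit P.det := isUnit_iff_isUnit_det _ |>.1 hP.isUnit
  have hDinv : D * D⁻¹ = 1 := Matrix.mul_nonsing_inv _ hDdet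
  have hDinv' : D⁻¹ * D = 1 := Matrix.nonsing_inv_mul _ hDdet
  have hPinv : P * P⁻¹ = 1 := Matrix.mul_nonsing_inv _ hPdet
  have hPinv' : P⁻¹ * P = 1 := Matrix.nonsing_inv_mul _ hPdet
  -- X⁻¹ = C
  have hXinv : X⁻¹ = C := by
    rw [hX, Matrix.mul_inv_rev, Matrix.nonsing_inv_nonsing_inv _ hDdet, hD, hC,
      add_mul, one_mul, hPinv, add_comm]
  -- (1 - X)⁻¹ = D
  have h1X : 1 - X = D⁻¹ := by
    rw [hX, ← hDinv, ← sub_mul, show D - P = 1 from by rw [hD]; abel, Matrix.one_mul]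
  have h1Xinv : (1 - X)⁻¹ = D := by
    rw [h1X, Matrix.nonsing_inv_nonsing_inv _ hDdet]
  -- V = D * S * D
  have hV' : V = D * S * D := by
    rw [hS]
    simp only [← Matrix.mul_assoc, hDinv]
    rw [Matrix.one_mul, Matrix.mul_assoc, hDinv', Matrix.mul_one]
  -- P⁻¹ * D = C
  have hPD : P⁻¹ * D = C := by rw [hD, hC, mul_add, mul_one, hPinv']
  have hDC : D * C = C + D := by
    rw [hD, hC, add_mul, mul_add, mul_add, one_mul, one_mul, mul_one, hPinv]
    try abel
  -- S is symmetric
  have hSsym : Sᴴ = S := by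
    rw [hS]
    simp only [conjTranspose_mul, hDpd.isHermitian.inv.eq, hV.eq, Matrix.mul_assoc]
  -- nonneg cross terms
  have hcross1 : 0 ≤ Matrix.trace (S * C * S * D) := by
    have h1 : (S * C * S).PosSemidef := by
      have := hCpd.posSemidef.conjTranspose_mul_mul_same S
      rwa [hSsym] at this
    exact trace_mul_nonneg h1 hDpd.posSemidef
  have hcross2 : 0 ≤ Matrix.trace (S * D * S * C) := by
    have h1 : (S * D * S).PosSemidef := by
      have := hDpd.posSemidef.conjTranspose_mul_mul_same S
      rwa [hSsym] at this
    exact trace_mul_nonneg h1 hCpd.posSemidef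
  -- key trace identity
  have key : Matrix.trace (P⁻¹ * V * P⁻¹ * V)
      = Matrix.trace (C * S * C * S) + Matrix.trace (D * S * D * S)
        + Matrix.trace (S * C * S * D) + Matrix.trace (S * D * S * C) := by
    have e1 : P⁻¹ * V * P⁻¹ * V = C * (S * D * C * S * D) := by
      rw [hV', ← hPD]
      noncomm_ring
    rw [e1, Matrix.trace_mul_comm]
    have e2 : S * D * C * S * D * C = S * (D * C) * (S * (D * C)) := by
      noncomm_ring
    rw [e2, hDC]
    have e3 : S * (C + D) * (S * (C + D))
        = S * (C * (S * C)) + S * (C * (S * D)) + S * (D * (S * C)) + S * (D * (S * D)) := by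
      noncomm_ring
    rw [e3, Matrix.trace_add, Matrix.trace_add, Matrix.trace_add]
    have c1 : Matrix.trace (S * (C * (S * C))) = Matrix.trace (C * S * C * S) := by
      rw [Matrix.trace_mul_comm]; noncomm_ring
    have c2 : Matrix.trace (S * (D * (S * D))) = Matrix.trace (D * S * D * S) := by
      rw [Matrix.trace_mul_comm]; noncomm_ring
    have c3 : Matrix.trace (S * (C * (S * D))) = Matrix.trace (S * C * S * D) := by
      noncomm_ring
    have c4 : Matrix.trace (S * (D * (S * C))) = Matrix.trace (S * D * S * C) := by
      noncomm_ring
    rw [c1, c2, c3, c4]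
    ring
  rw [hXinv, h1Xinv, key]
  linarith
end
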